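/- arXiv:1504.08118 — 2 statements merged into one kernel-verified Lean document; each statement's English description precedes it below -/
import Mathlib

section
/- Let f : [0,∞) → (0,∞) be a twice continuously differentiable, eventually decreasing probability density function such that for every d > 0 the integral ∫₀¹ f(dy)·f(d(1−y)) dy is positive and finite. Define f_{Z_d}(x) = f(dx)·f(d(1−x)) / ∫₀¹ f(dy)·f(d(1−y)) dy for x ∈ [0,1], and let μ_d be the probability measure on [0,1] with density f_{Z_d}. Suppose there exists x₀ such that (d²/dx²) log f(x) > 0 for all x > x₀ (i.e. L = 1), and suppose f_{Z_d}(x) → 0 as d → ∞ for every x ∈ (0,1/2). Then μ_d converges in distribution, as d → ∞, to the measure (1/2)·δ_0 + (1/2)·δ_1, where δ_0 and δ_1 are Dirac measures at 0 and 1. -/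
/-!
Eventually `log f` is convex, so once `d ε` exceeds `x₀` the function
`x ↦ log f(d x) + log f(d (1 - x))` is convex and symmetric on `[ε, 1 - ε]`, hence maximal at
the endpoints: there `f_{Z_d} ≤ f_{Z_d}(ε) → 0`, so `μ_d([ε, 1 - ε]) → 0`. By the symmetry
`x ↦ 1 - x` the remaining mass is split equally between the `ε`-balls around `0` and `1`, each
carrying at least `(1 - μ_d([ε, 1 - ε])) / 2`, and an open set containing `0` (or `1`) contains
such a ball for small `ε`.
-/

open MeasureTheory Real Filter Set Metric Topology
open scoped ENNReal

theorem ConvexOn.add_comp_sub_le {g : ℝ → ℝ} {a b x : ℝ} (hg : ConvexOn ℝ (Icc a b) g)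
    (hx : x ∈ Icc a b) : g x + g (a + b - x) ≤ g a + g b := by
  have hab : a ≤ b := hx.1.trans hx.2
  rw [← segment_eq_Icc hab] at hx
  obtain ⟨p, q, hp, hq, hpq, rfl⟩ := hx
  have ha : a ∈ Icc a b := left_mem_Icc.2 hab
  have hb : b ∈ Icc a b := right_mem_Icc.2 hab
  have h₁ := hg.2 ha hb hp hq hpq
  have h₂ := hg.2 ha hb hq hp (by linarith)
  have hrefl : a + b - (p • a + q • b) = q • a + p • b := by
    simp only [smul_eq_mul]; linear_combination -(a + b) * hpq
  rw [hrefl]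
  simp only [smul_eq_mul] at h₁ h₂ ⊢
  linear_combination h₁ + h₂ + (g a + g b) * hpq

theorem withDensity_ofReal_apply_le {α : Type*} [MeasurableSpace α] {μ : Measure α} {ρ : α → ℝ}
    {s : Set α} {c : ℝ} (hs : MeasurableSet s) (hρ : ∀ x ∈ s, ρ x ≤ c) :
    μ.withDensity (fun x => ENNReal.ofReal (ρ x)) s ≤ ENNReal.ofReal c * μ s := by
  rw [withDensity_apply _ hs, ← setLIntegral_const]
  exact setLIntegral_mono measurable_const fun x hx => ENNReal.ofReal_le_ofReal (hρ x hx)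

theorem map_one_sub_withDensity_Icc {ρ : ℝ → ℝ} (hρ : ∀ x, ρ (1 - x) = ρ x) :
    ((volume.restrict (Icc 0 1)).withDensity fun x => ENNReal.ofReal (ρ x)).map (fun x => 1 - x) =
      (volume.restrict (Icc 0 1)).withDensity fun x => ENNReal.ofReal (ρ x) := by
  have hφ : MeasurePreserving (fun x : ℝ => 1 - x) volume volume :=
    Measure.measurePreserving_sub_left volume 1
  have hemb : MeasurableEmbedding (fun x : ℝ => 1 - x) :=
    (MeasurableEquiv.subLeft (1 : ℝ)).measurableEmbedding
  ext s hs
  have hpre : (fun x : ℝ => 1 - x) ⁻¹' s ∩ Icc 0 1 = (fun x : ℝ => 1 - x) ⁻¹' (s ∩ Icc 0 1) := by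
    rw [preimage_inter]
    congr 1
    ext x
    simp only [mem_preimage, mem_Icc]
    constructor <;> rintro ⟨h₀, h₁⟩ <;> constructor <;> linarith
  rw [Measure.map_apply hφ.measurable hs, withDensity_apply _ (hφ.measurable hs),
    withDensity_apply _ hs, Measure.restrict_restrict (hφ.measurable hs),
    Measure.restrict_restrict hs, hpre]
  simpa only [hρ] using hφ.setLIntegral_comp_preimage_emb hemb (fun x => ENNReal.ofReal (ρ x)) _

section SymmetricMeasure

variable {ν : Measure ℝ}

theorem measure_ball_one_eq (hsymm : ν.map (fun x => 1 - x) = ν) (ε : ℝ) :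
    ν (ball 1 ε) = ν (ball 0 ε) := by
  conv_lhs => rw [← hsymm]
  rw [Measure.map_apply (by fun_prop) measurableSet_ball]
  congr 1
  ext x
  simp

theorem one_le_two_mul_measure_ball_add [IsProbabilityMeasure ν]
    (hsymm : ν.map (fun x => 1 - x) = ν) (hsupp : ∀ᵐ x ∂ν, x ∈ Icc (0 : ℝ) 1) {ε : ℝ}
    (hε : 0 < ε) : 1 ≤ 2 * ν (ball 0 ε) + ν (Icc ε (1 - ε)) := by
  have hcover : ∀ x ∈ Icc (0 : ℝ) 1, x ∈ ball 0 ε ∪ Icc ε (1 - ε) ∪ ball 1 ε := by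
    rintro x ⟨h₀, h₁⟩
    simp only [Real.ball_eq_Ioo, mem_union, mem_Ioo, mem_Icc]
    by_cases hl : x < ε
    · exact Or.inl (Or.inl ⟨by linarith, by linarith⟩)
    by_cases hr : x ≤ 1 - ε
    · exact Or.inl (Or.inr ⟨not_lt.1 hl, hr⟩)
    · exact Or.inr ⟨by linarith, by linarith⟩
  calc 1 = ν univ := measure_univ.symm
    _ ≤ ν (ball 0 ε ∪ Icc ε (1 - ε) ∪ ball 1 ε) :=
      measure_mono_ae (hsupp.mono fun x hx _ => hcover x hx)
    _ ≤ ν (ball 0 ε) + ν (Icc ε (1 - ε)) + ν (ball 1 ε) :=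
      (measure_union_le _ _).trans (by gcongr; exact measure_union_le _ _)
    _ = 2 * ν (ball 0 ε) + ν (Icc ε (1 - ε)) := by rw [measure_ball_one_eq hsymm]; ring

end SymmetricMeasure

theorem dirac_mul_le_measure_inter {α : Type*} [MeasurableSpace α] {A B : Set α} {p : α}
    (hA : MeasurableSet A) (hB : p ∈ A → B ⊆ A) (ν : Measure α) :
    Measure.dirac p A * ν B ≤ ν (A ∩ B) := by
  rw [Measure.dirac_apply' _ hA]
  by_cases hp : p ∈ A
  · simp [indicator_of_mem hp, inter_eq_right.2 (hB hp)]
  · simp [indicator_of_notMem hp]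

theorem IsOpen.eventually_ball_subset {α : Type*} [PseudoMetricSpace α] {A : Set α}
    (hA : IsOpen A) (p : α) : ∀ᶠ ε in 𝓝[>] (0 : ℝ), p ∈ A → ball p ε ⊆ A := by
  by_cases hp : p ∈ A
  · obtain ⟨r, hr, hball⟩ := Metric.isOpen_iff.1 hA p hp
    filter_upwards [Ioo_mem_nhdsGT hr] with ε hε _ using (ball_subset_ball hε.2.le).trans hball
  · exact .of_forall fun _ h => absurd h hp

theorem le_liminf_measure_of_isOpen {ν : ℝ → Measure ℝ}
    (hprob : ∀ᶠ d in atTop, IsProbabilityMeasure (ν d))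
    (hsymm : ∀ d, (ν d).map (fun x => 1 - x) = ν d) (hsupp : ∀ d, ∀ᵐ x ∂ν d, x ∈ Icc (0 : ℝ) 1)
    (hmid : ∀ ε, 0 < ε → ε < 1 / 2 → Tendsto (fun d => ν d (Icc ε (1 - ε))) atTop (𝓝 0))
    {A : Set ℝ} (hA : IsOpen A) :
    ((1 / 2 : ℝ≥0∞) • Measure.dirac (0 : ℝ) + (1 / 2 : ℝ≥0∞) • Measure.dirac (1 : ℝ)) A ≤
      liminf (fun d => ν d A) atTop := by
  obtain ⟨ε, h₀, h₁, hε⟩ := ((hA.eventually_ball_subset 0).and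
    ((hA.eventually_ball_subset 1).and (Ioo_mem_nhdsGT (by norm_num : (0 : ℝ) < 1 / 2)))).exists
  set w := Measure.dirac (0 : ℝ) A + Measure.dirac (1 : ℝ) A
  have hw : w ≠ ⊤ := ENNReal.add_ne_top.2 ⟨measure_ne_top _ _, measure_ne_top _ _⟩
  have hdisj : Disjoint (ball (0 : ℝ) ε) (ball 1 ε) :=
    ball_disjoint_ball (by rw [Real.dist_eq]; norm_num; linarith)
  have hlim : Tendsto (fun d => w * (2⁻¹ * (1 - ν d (Icc ε (1 - ε))))) atTop (𝓝 (w * 2⁻¹)) := by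
    simpa using ENNReal.Tendsto.const_mul (a := w) (ENNReal.Tendsto.const_mul (a := 2⁻¹)
      (ENNReal.Tendsto.sub tendsto_const_nhds (hmid ε hε.1 hε.2) (Or.inl ENNReal.one_ne_top))
      (Or.inr (by simp))) (Or.inr hw)
  have hev : ∀ᶠ d in atTop, w * (2⁻¹ * (1 - ν d (Icc ε (1 - ε)))) ≤ ν d A := by
    filter_upwards [hprob] with d hd
    have key := one_le_two_mul_measure_ball_add (hsymm d) (hsupp d) hε.1
    calc w * (2⁻¹ * (1 - ν d (Icc ε (1 - ε)))) ≤ w * (2⁻¹ * (2 * ν d (ball 0 ε))) := by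
          gcongr; exact tsub_le_iff_right.2 key
      _ = Measure.dirac 0 A * ν d (ball 0 ε) + Measure.dirac 1 A * ν d (ball 1 ε) := by
          rw [← mul_assoc 2⁻¹, ENNReal.inv_mul_cancel two_ne_zero ENNReal.ofNat_ne_top, one_mul,
            measure_ball_one_eq (hsymm d), add_mul]
      _ ≤ ν d (A ∩ ball 0 ε) + ν d (A ∩ ball 1 ε) :=
          add_le_add (dirac_mul_le_measure_inter hA.measurableSet h₀ _)
            (dirac_mul_le_measure_inter hA.measurableSet h₁ _)
      _ = ν d (A ∩ ball 0 ε ∪ A ∩ ball 1 ε) :=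
          (measure_union (hdisj.mono inter_subset_right inter_subset_right)
            (hA.measurableSet.inter measurableSet_ball)).symm
      _ ≤ ν d A := measure_mono (union_subset inter_subset_left inter_subset_left)
  calc ((1 / 2 : ℝ≥0∞) • Measure.dirac (0 : ℝ) + (1 / 2 : ℝ≥0∞) • Measure.dirac (1 : ℝ)) A
      = w * 2⁻¹ := by
        simp only [Measure.add_apply, Measure.smul_apply, smul_eq_mul, one_div, w]; ring
    _ ≤ liminf (fun d => ν d A) atTop := hlim.liminf_eq ▸ liminf_le_liminf hev

section LogConvex

variable {f : ℝ → ℝ} {x₀ : ℝ}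

theorem convexOn_log_Ici (hpos : ∀ x, 0 ≤ x → 0 < f x) (hcont : ContinuousOn f (Ici 0))
    (hlogcv : ∀ x > x₀, 0 < deriv (deriv fun t => log (f t)) x) :
    ConvexOn ℝ (Ici (max x₀ 0)) fun t => log (f t) := by
  have hsub : Ici (max x₀ 0) ⊆ Ici 0 := Ici_subset_Ici.2 (le_max_right _ _)
  refine (strictConvexOn_of_deriv2_pos (convex_Ici _) ?_ fun t ht => ?_).convexOn
  · exact (hcont.mono hsub).log fun t ht => (hpos t (hsub ht)).ne'
  · rw [interior_Ici] at ht
    exact hlogcv t ((le_max_left _ _).trans_lt ht)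

theorem apply_mul_apply_one_sub_le (hpos : ∀ x, 0 ≤ x → 0 < f x) (hcont : ContinuousOn f (Ici 0))
    (hlogcv : ∀ x > x₀, 0 < deriv (deriv fun t => log (f t)) x) {d ε y : ℝ} (hd : 0 ≤ d)
    (hdε : max x₀ 0 ≤ d * ε) (hy : y ∈ Icc ε (1 - ε)) :
    f (d * y) * f (d * (1 - y)) ≤ f (d * ε) * f (d * (1 - ε)) := by
  have hε : ε ≤ 1 - ε := hy.1.trans hy.2
  have hdy : d * y ∈ Icc (d * ε) (d * (1 - ε)) :=
    ⟨mul_le_mul_of_nonneg_left hy.1 hd, mul_le_mul_of_nonneg_left hy.2 hd⟩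
  have hconv := (convexOn_log_Ici hpos hcont hlogcv).subset
    (Icc_subset_Ici_iff (mul_le_mul_of_nonneg_left hε hd) |>.2 hdε) (convex_Icc _ _)
  have key := hconv.add_comp_sub_le hdy
  rw [show d * ε + d * (1 - ε) - d * y = d * (1 - y) by ring] at key
  have h0 : 0 ≤ d * ε := (le_max_right _ _).trans hdε
  have hy₀ : 0 < f (d * y) := hpos _ (h0.trans hdy.1)
  have hy₁ : 0 < f (d * (1 - y)) := hpos _ (by nlinarith [hy.2])
  have hε₀ : 0 < f (d * ε) := hpos _ h0
  have hε₁ : 0 < f (d * (1 - ε)) := hpos _ (h0.trans (hdy.1.trans hdy.2))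
  rwa [← log_le_log_iff (by positivity) (by positivity), log_mul hy₀.ne' hy₁.ne',
    log_mul hε₀.ne' hε₁.ne']

theorem tendsto_withDensity_Icc_zero (hpos : ∀ x, 0 ≤ x → 0 < f x)
    (hcont : ContinuousOn f (Ici 0)) (hlogcv : ∀ x > x₀, 0 < deriv (deriv fun t => log (f t)) x)
    {fZ : ℝ → ℝ → ℝ} (hfZ : ∀ d x, fZ d x =
      f (d * x) * f (d * (1 - x)) / ∫ y in (0 : ℝ)..1, f (d * y) * f (d * (1 - y)))
    {ε : ℝ} (hε : 0 < ε) (hto0 : Tendsto (fun d => fZ d ε) atTop (𝓝 0)) :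
    Tendsto (fun d => (volume.restrict (Icc 0 1)).withDensity
      (fun x => ENNReal.ofReal (fZ d x)) (Icc ε (1 - ε))) atTop (𝓝 0) := by
  have hbound : ∀ᶠ d in atTop, ∀ y ∈ Icc ε (1 - ε), fZ d y ≤ fZ d ε := by
    filter_upwards [eventually_ge_atTop 0, eventually_ge_atTop (max x₀ 0 / ε)] with d hd hdε y hy
    have hnorm : 0 ≤ ∫ y in (0 : ℝ)..1, f (d * y) * f (d * (1 - y)) :=
      intervalIntegral.integral_nonneg zero_le_one fun u hu =>
        (mul_pos (hpos _ (mul_nonneg hd hu.1)) (hpos _ (mul_nonneg hd (sub_nonneg.2 hu.2)))).le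
    rw [hfZ, hfZ]
    exact div_le_div_of_nonneg_right
      (apply_mul_apply_one_sub_le hpos hcont hlogcv hd ((div_le_iff₀ hε).1 hdε) hy) hnorm
  have hvol : (volume.restrict (Icc (0 : ℝ) 1)) (Icc ε (1 - ε)) ≠ ⊤ := measure_ne_top _ _
  have hub := ENNReal.Tendsto.mul_const (ENNReal.tendsto_ofReal hto0) (Or.inr hvol)
  rw [ENNReal.ofReal_zero, zero_mul] at hub
  refine tendsto_of_tendsto_of_tendsto_of_le_of_le' tendsto_const_nhds hub
    (.of_forall fun _ => zero_le) ?_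
  filter_upwards [hbound] with d hd
  exact withDensity_ofReal_apply_le measurableSet_Icc hd

end LogConvex

theorem stmt_12_general
    (f : ℝ → ℝ)
    (hpos : ∀ x, 0 ≤ x → 0 < f x)
    (hsmooth : ContDiffOn ℝ 2 f (Set.Ici (0 : ℝ)))
    (x₀ : ℝ)
    (hlogcv : ∀ x > x₀, 0 < deriv (deriv (fun t => Real.log (f t))) x)
    (fZ : ℝ → ℝ → ℝ)
    (hfZ : ∀ d x, fZ d x =
      f (d * x) * f (d * (1 - x)) / ∫ y in (0 : ℝ)..1, f (d * y) * f (d * (1 - y)))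
    (hto0 : ∀ x ∈ Set.Ioo (0 : ℝ) (1 / 2),
      Filter.Tendsto (fun d => fZ d x) Filter.atTop (nhds 0))
    (μ : ℝ → Measure ℝ)
    (hμ : ∀ d, μ d = (volume.restrict (Set.Icc (0 : ℝ) 1)).withDensity
      (fun x => ENNReal.ofReal (fZ d x)))
    (hprob : ∀ d > (0 : ℝ), IsProbabilityMeasure (μ d)) :
    ∀ A : Set ℝ, IsOpen A →
      ((1 / 2 : ℝ≥0∞) • Measure.dirac (0 : ℝ) + (1 / 2 : ℝ≥0∞) • Measure.dirac (1 : ℝ)) A ≤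
        Filter.liminf (fun d => μ d A) Filter.atTop := by
  intro A hA
  have hsymm : ∀ d x, fZ d (1 - x) = fZ d x := fun d x => by
    rw [hfZ, hfZ, sub_sub_cancel, mul_comm]
  refine le_liminf_measure_of_isOpen ((eventually_gt_atTop 0).mono hprob)
    (fun d => hμ d ▸ map_one_sub_withDensity_Icc (hsymm d))
    (fun d => hμ d ▸
      (withDensity_absolutelyContinuous _ _).ae_le (ae_restrict_mem measurableSet_Icc))
    (fun ε hε hε' => ?_) hA
  simp_rw [hμ]
  exact tendsto_withDensity_Icc_zero hpos hsmooth.continuousOn hlogcv hfZ hε (hto0 ε ⟨hε, hε'⟩)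

/-- If `(log f)'' > 0` eventually (`L = 1`) and `f_{Z_d}(x) → 0` for all
`x ∈ (0,1/2)`, then the laws `μ_d` of `Z_d` converge in distribution to
`(1/2)·δ₀ + (1/2)·δ₁`: `liminf_{d→∞} μ_d(A) ≥ ((1/2)δ₀ + (1/2)δ₁)(A)` for every open `A`. -/
theorem stmt_12
    (f : ℝ → ℝ)
    (hpos : ∀ x, 0 ≤ x → 0 < f x)
    (hsmooth : ContDiffOn ℝ 2 f (Set.Ici (0 : ℝ)))
    (hdens : ∫ x in Set.Ici (0 : ℝ), f x = 1)
    (hdecr : ∃ y₀ : ℝ, AntitoneOn f (Set.Ici y₀))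
    (hint : ∀ d > (0 : ℝ),
      IntervalIntegrable (fun y => f (d * y) * f (d * (1 - y))) volume 0 1)
    (hintpos : ∀ d > (0 : ℝ), 0 < ∫ y in (0 : ℝ)..1, f (d * y) * f (d * (1 - y)))
    (x₀ : ℝ)
    (hlogcv : ∀ x > x₀, 0 < deriv (deriv (fun t => Real.log (f t))) x)
    (fZ : ℝ → ℝ → ℝ)
    (hfZ : ∀ d x, fZ d x =
      f (d * x) * f (d * (1 - x)) / ∫ y in (0 : ℝ)..1, f (d * y) * f (d * (1 - y)))
    (hto0 : ∀ x ∈ Set.Ioo (0 : ℝ) (1 / 2),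
      Filter.Tendsto (fun d => fZ d x) Filter.atTop (nhds 0))
    (μ : ℝ → Measure ℝ)
    (hμ : ∀ d, μ d = (volume.restrict (Set.Icc (0 : ℝ) 1)).withDensity
      (fun x => ENNReal.ofReal (fZ d x)))
    (hprob : ∀ d > (0 : ℝ), IsProbabilityMeasure (μ d)) :
    ∀ A : Set ℝ, IsOpen A →
      ((1 / 2 : ℝ≥0∞) • Measure.dirac (0 : ℝ) + (1 / 2 : ℝ≥0∞) • Measure.dirac (1 : ℝ)) A ≤
        Filter.liminf (fun d => μ d A) Filter.atTop :=
  stmt_12_general f hpos hsmooth x₀ hlogcv fZ hfZ hto0 μ hμ hprob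
end

section
/- Let f_Y(x) = C_Y·exp(−x − √x) for x > 0, where C_Y⁻¹ = ∫₀^∞ exp(−y − √y) dy, define f_{Z_d}(x) = f_Y(dx)·f_Y(d(1−x)) / ∫₀¹ f_Y(dy)·f_Y(d(1−y)) dy for x ∈ (0,1), and let μ_d be the probability measure on [0,1] with density f_{Z_d}. Then (d²/dx²) log f_Y(x) = (1/4)·x^{−3/2} > 0 for all x > 0, and for every x ∈ (0,1/2) one has d·( f_Y'(dx)/f_Y(dx) − f_Y'(d(1−x))/f_Y(d(1−x)) ) = (1/2)·√d·( −x^{−1/2} + (1−x)^{−1/2} ) → −∞ as d → ∞, and consequently μ_d converges in distribution, as d → ∞, to the measure (1/2)·δ_0 + (1/2)·δ_1. -/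
/-!
On `(0, ∞)`, `log f_Y x = log C_Y - x - √x`, so both derivative claims are explicit computations
with `x ^ (-1/2)`. For the limit law, `f_Y(dy) f_Y(d(1-y)) = C_Y² e^{-d} exp(-√d (√y + √(1-y)))`,
and `√y + √(1-y)` equals `1` at the endpoints but is at least `1 + ε/3` on `[ε, 1-ε]`. Comparing
with the mass near `0` shows that `[ε, 1-ε]` carries mass `O(exp(-√d ε/6))`, and the symmetry
`y ↦ 1 - y` splits the remaining mass evenly between neighbourhoods of `0` and `1`.
-/

open MeasureTheory Real Filter Set
open scoped ENNReal Topology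

theorem hasDerivAt_neg_sub_sqrt {t : ℝ} (ht : 0 < t) :
    HasDerivAt (fun t => -t - √t) (-1 - t ^ (-(1 / 2) : ℝ) / 2) t := by
  simp_rw [sqrt_eq_rpow]
  refine ((hasDerivAt_id' t).neg.sub
    (hasDerivAt_rpow_const (p := 1 / 2) (.inl ht.ne'))).congr_deriv ?_
  rw [show (1 / 2 : ℝ) - 1 = -(1 / 2) by norm_num]
  ring

theorem hasDerivAt_neg_one_sub_rpow {t : ℝ} (ht : 0 < t) :
    HasDerivAt (fun t => -1 - t ^ (-(1 / 2) : ℝ) / 2) (t ^ (-(3 / 2) : ℝ) / 4) t := by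
  have h := ((hasDerivAt_rpow_const (p := -(1 / 2)) (.inl ht.ne')).div_const 2).const_sub (-1)
  refine h.congr_deriv ?_
  rw [show (-(1 / 2) : ℝ) - 1 = -(3 / 2) by norm_num]
  ring

theorem deriv_log_eq_of_eq_mul_exp {CY : ℝ} (hCY : CY ≠ 0) {fY : ℝ → ℝ}
    (hfY : ∀ x, 0 < x → fY x = CY * exp (-x - √x)) {x : ℝ} (hx : 0 < x) :
    deriv (fun t => log (fY t)) x = -1 - x ^ (-(1 / 2) : ℝ) / 2 := by
  have hloc : (fun t => log (fY t)) =ᶠ[𝓝 x] fun t => log CY + (-t - √t) := by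
    filter_upwards [Ioi_mem_nhds hx] with t ht
    rw [hfY t ht, log_mul hCY (exp_ne_zero _), log_exp]
  rw [hloc.deriv_eq, ((hasDerivAt_neg_sub_sqrt hx).const_add _).deriv]

theorem deriv_div_self_eq_of_eq_mul_exp {CY : ℝ} (hCY : CY ≠ 0) {fY : ℝ → ℝ}
    (hfY : ∀ x, 0 < x → fY x = CY * exp (-x - √x)) {x : ℝ} (hx : 0 < x) :
    deriv fY x / fY x = -1 - x ^ (-(1 / 2) : ℝ) / 2 := by
  have hloc : fY =ᶠ[𝓝 x] fun t => CY * exp (-t - √t) := by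
    filter_upwards [Ioi_mem_nhds hx] with t ht using hfY t ht
  rw [hloc.deriv_eq, ((hasDerivAt_neg_sub_sqrt hx).exp.const_mul CY).deriv, hfY x hx]
  field_simp

theorem deriv_deriv_log_eq_of_eq_mul_exp {CY : ℝ} (hCY : CY ≠ 0) {fY : ℝ → ℝ}
    (hfY : ∀ x, 0 < x → fY x = CY * exp (-x - √x)) {x : ℝ} (hx : 0 < x) :
    deriv (deriv fun t => log (fY t)) x = x ^ (-(3 / 2) : ℝ) / 4 := by
  have hloc : (deriv fun t => log (fY t)) =ᶠ[𝓝 x] fun t => -1 - t ^ (-(1 / 2) : ℝ) / 2 := by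
    filter_upwards [Ioi_mem_nhds hx] with t ht using deriv_log_eq_of_eq_mul_exp hCY hfY ht
  rw [hloc.deriv_eq, (hasDerivAt_neg_one_sub_rpow hx).deriv]

theorem mul_sub_deriv_div_self_eq {CY : ℝ} (hCY : CY ≠ 0) {fY : ℝ → ℝ}
    (hfY : ∀ x, 0 < x → fY x = CY * exp (-x - √x)) {x d : ℝ} (hx : x ∈ Ioo (0 : ℝ) 1)
    (hd : 0 < d) :
    d * (deriv fY (d * x) / fY (d * x) - deriv fY (d * (1 - x)) / fY (d * (1 - x))) =
      (1 / 2) * √d * (-x ^ (-(1 / 2) : ℝ) + (1 - x) ^ (-(1 / 2) : ℝ)) := by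
  have hx' : 0 < 1 - x := sub_pos.2 hx.2
  rw [deriv_div_self_eq_of_eq_mul_exp hCY hfY (mul_pos hd hx.1),
    deriv_div_self_eq_of_eq_mul_exp hCY hfY (mul_pos hd hx'), mul_rpow hd.le hx.1.le,
    mul_rpow hd.le hx'.le, sqrt_eq_rpow]
  have hdd : d * d ^ (-(1 / 2) : ℝ) = d ^ (1 / 2 : ℝ) := by
    rw [← rpow_one_add' hd.le (by norm_num)]; norm_num
  linear_combination (-(x ^ (-(1 / 2) : ℝ)) + (1 - x) ^ (-(1 / 2) : ℝ)) / 2 * hdd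

theorem tendsto_mul_sub_deriv_div_self_atBot {CY : ℝ} (hCY : CY ≠ 0) {fY : ℝ → ℝ}
    (hfY : ∀ x, 0 < x → fY x = CY * exp (-x - √x)) {x : ℝ} (hx : x ∈ Ioo (0 : ℝ) (1 / 2)) :
    Tendsto (fun d => d * (deriv fY (d * x) / fY (d * x) -
      deriv fY (d * (1 - x)) / fY (d * (1 - x)))) atTop atBot := by
  have hneg : (1 / 2) * (-x ^ (-(1 / 2) : ℝ) + (1 - x) ^ (-(1 / 2) : ℝ)) < 0 := by
    have := rpow_lt_rpow_of_neg hx.1 (by linarith [hx.2] : x < 1 - x)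
      (by norm_num : (-(1 / 2) : ℝ) < 0)
    linarith
  refine (tendsto_sqrt_atTop.atTop_mul_const_of_neg hneg).congr' ?_
  filter_upwards [eventually_gt_atTop 0] with d hd
  rw [mul_sub_deriv_div_self_eq hCY hfY ⟨hx.1, by linarith [hx.2]⟩ hd]
  ring

theorem integral_exp_neg_sub_sqrt_pos : 0 < ∫ y in Ioi (0 : ℝ), exp (-y - √y) := by
  have hint : IntegrableOn (fun y : ℝ => exp (-y - √y)) (Ioi 0) := by
    refine (exp_neg_integrableOn_Ioi 0 one_pos).mono' (by fun_prop) (.of_forall fun y => ?_)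
    rw [norm_of_nonneg (exp_pos _).le, neg_one_mul]
    exact exp_le_exp.2 (by linarith [sqrt_nonneg y])
  exact integral_pos_iff_support_of_nonneg (fun _ => (exp_pos _).le) hint |>.2 (by
    simp [Function.support, exp_ne_zero])

theorem dirac_mul_le_inter {X : Type*} [MeasurableSpace X] [MeasurableSingletonClass X]
    (ν : Measure X) {z : X} {s A : Set X} (h : z ∈ A → s ⊆ A) :
    Measure.dirac z A * ν s ≤ ν (A ∩ s) := by
  by_cases hz : z ∈ A
  · simp [Measure.dirac_apply_of_mem hz, inter_eq_right.2 (h hz)]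
  · simp [Measure.dirac_apply, hz]

theorem eventually_closedBall_subset_of_mem {A : Set ℝ} (hA : IsOpen A) (z : ℝ) :
    ∀ᶠ ε in 𝓝 (0 : ℝ), z ∈ A → Metric.closedBall z ε ⊆ A := by
  by_cases hz : z ∈ A
  · simpa [hz] using eventually_closedBall_subset (hA.mem_nhds hz)
  · simp [hz]

theorem exists_Icc_subset_of_endpoints {A : Set ℝ} (hA : IsOpen A) :
    ∃ ε, 0 < ε ∧ ε < 1 / 2 ∧ (0 ∈ A → Icc 0 ε ⊆ A) ∧ (1 ∈ A → Icc (1 - ε) 1 ⊆ A) := by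
  have h := ((eventually_closedBall_subset_of_mem hA 0).and
    (eventually_closedBall_subset_of_mem hA 1)).and (gt_mem_nhds (by norm_num : (0 : ℝ) < 1 / 2))
  obtain ⟨ε, ⟨⟨h0, h1⟩, hε⟩, hε0⟩ :=
    ((h.filter_mono nhdsWithin_le_nhds).and (self_mem_nhdsWithin (s := Ioi 0))).exists
  refine ⟨ε, hε0, hε, fun hA0 => ?_, fun hA1 => ?_⟩
  · exact (Icc_subset_Icc (by linarith) (by linarith)).trans (Real.closedBall_eq_Icc ▸ h0 hA0)
  · exact (Icc_subset_Icc (by linarith) (by linarith)).trans (Real.closedBall_eq_Icc ▸ h1 hA1)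

/-- By symmetry, the mass outside `[ε, 1-ε]` is split evenly between the two end intervals. -/
theorem half_dirac_add_half_dirac_le_liminf {ι : Type*} {l : Filter ι} [l.NeBot] {ν : ι → Measure ℝ}
    (hmass : ∀ᶠ i in l, ν i (Icc 0 1) = 1)
    (hsymm : ∀ᶠ i in l, (ν i).map (fun x => 1 - x) = ν i)
    (hconc : ∀ ε, 0 < ε → ε < 1 / 2 → Tendsto (fun i => ν i (Icc ε (1 - ε))) l (𝓝 0))
    {A : Set ℝ} (hA : IsOpen A) :
    ((1 / 2 : ℝ≥0∞) • Measure.dirac (0 : ℝ) + (1 / 2 : ℝ≥0∞) • Measure.dirac (1 : ℝ)) A ≤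
      liminf (fun i => ν i A) l := by
  obtain ⟨ε, hε0, hε, h0, h1⟩ := exists_Icc_subset_of_endpoints hA
  set c := Measure.dirac (0 : ℝ) A + Measure.dirac (1 : ℝ) A
  have hlim : Tendsto (fun i => c * ((1 - ν i (Icc ε (1 - ε))) / 2)) l (𝓝 (c * ((1 - 0) / 2))) :=
    ENNReal.Tendsto.const_mul (ENNReal.Tendsto.div_const
      ((ENNReal.continuous_sub_left ENNReal.one_ne_top).tendsto 0 |>.comp (hconc ε hε0 hε))
      (by simp)) (.inr (ENNReal.add_ne_top.2 ⟨measure_ne_top _ _, measure_ne_top _ _⟩))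
  have hc : ((1 / 2 : ℝ≥0∞) • Measure.dirac (0 : ℝ) + (1 / 2 : ℝ≥0∞) • Measure.dirac (1 : ℝ)) A =
      c * ((1 - 0) / 2) := by
    rw [Measure.add_apply, Measure.smul_apply, Measure.smul_apply, smul_eq_mul, smul_eq_mul,
      ← mul_add, tsub_zero, mul_comm]
  rw [hc, ← hlim.liminf_eq]
  refine liminf_le_liminf ?_
  filter_upwards [hmass, hsymm] with i hmass hsymm
  have hright : ν i (Icc (1 - ε) 1) = ν i (Icc 0 ε) := by
    conv_lhs => rw [← hsymm, Measure.map_apply (by fun_prop) measurableSet_Icc,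
      preimage_const_sub_Icc, sub_self, sub_sub_cancel]
  have hcover : 1 - ν i (Icc ε (1 - ε)) ≤ ν i (Icc 0 ε) * 2 := by
    have hunion : Icc 0 ε ∪ Icc ε (1 - ε) ∪ Icc (1 - ε) 1 = Icc (0 : ℝ) 1 := by
      rw [Icc_union_Icc_eq_Icc hε0.le (by linarith),
        Icc_union_Icc_eq_Icc (by linarith) (by linarith)]
    rw [tsub_le_iff_right, ← hmass, ← hunion]
    calc ν i (Icc 0 ε ∪ Icc ε (1 - ε) ∪ Icc (1 - ε) 1)
        ≤ ν i (Icc 0 ε) + ν i (Icc ε (1 - ε)) + ν i (Icc (1 - ε) 1) :=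
          (measure_union_le _ _).trans (add_le_add_left (measure_union_le _ _) _)
      _ = ν i (Icc 0 ε) * 2 + ν i (Icc ε (1 - ε)) := by rw [hright]; ring
  have hdisj : Disjoint (A ∩ Icc 0 ε) (A ∩ Icc (1 - ε) 1) :=
    disjoint_left.2 fun x hx hx' => by linarith [hx.2.2, hx'.2.1]
  calc c * ((1 - ν i (Icc ε (1 - ε))) / 2)
      ≤ c * ν i (Icc 0 ε) := by gcongr; exact ENNReal.div_le_of_le_mul hcover
    _ = Measure.dirac 0 A * ν i (Icc 0 ε) + Measure.dirac 1 A * ν i (Icc (1 - ε) 1) := by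
      rw [hright, add_mul]
    _ ≤ ν i (A ∩ Icc 0 ε) + ν i (A ∩ Icc (1 - ε) 1) :=
      add_le_add (dirac_mul_le_inter _ h0) (dirac_mul_le_inter _ h1)
    _ = ν i (A ∩ Icc 0 ε ∪ A ∩ Icc (1 - ε) 1) :=
      (measure_union hdisj (hA.measurableSet.inter measurableSet_Icc)).symm
    _ ≤ ν i A := measure_mono (union_subset inter_subset_left inter_subset_left)

theorem map_one_sub_withDensity_restrict_Icc {g : ℝ → ℝ≥0∞} (hg : ∀ x, g (1 - x) = g x) :
    ((volume.restrict (Icc 0 1)).withDensity g).map (fun x => 1 - x) =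
      (volume.restrict (Icc 0 1)).withDensity g := by
  have hT : MeasurableEmbedding (fun x : ℝ => 1 - x) :=
    (MeasurableEquiv.subLeft (1 : ℝ)).measurableEmbedding
  ext s hs
  have hpre : (fun x : ℝ => 1 - x) ⁻¹' s ∩ Icc 0 1 = (fun x : ℝ => 1 - x) ⁻¹' (s ∩ Icc 0 1) := by
    rw [preimage_inter, preimage_const_sub_Icc, sub_self, sub_zero]
  rw [Measure.map_apply hT.measurable hs, withDensity_apply _ (hT.measurable hs),
    withDensity_apply _ hs, Measure.restrict_restrict (hT.measurable hs),
    Measure.restrict_restrict hs, hpre, ← (Measure.measurePreserving_sub_left volume 1)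
      |>.setLIntegral_comp_preimage_emb hT g (s ∩ Icc 0 1)]
  simp only [hg]

theorem withDensity_apply_le_mul {X : Type*} [MeasurableSpace X] {μ : Measure X} {g : X → ℝ≥0∞}
    {s : Set X} (hs : MeasurableSet s) {B : ℝ≥0∞} (hB : ∀ x ∈ s, g x ≤ B) :
    μ.withDensity g s ≤ B * μ s := by
  rw [withDensity_apply _ hs, ← setLIntegral_const]
  exact setLIntegral_mono measurable_const hB

theorem one_add_div_three_le_sqrt_add_sqrt {ε x : ℝ} (hε₀ : 0 ≤ ε) (hε : ε ≤ 1 / 2)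
    (hx : x ∈ Icc ε (1 - ε)) :
    1 + ε / 3 ≤ √x + √(1 - x) := by
  obtain ⟨hεx, hx1⟩ := hx
  have ha := sq_sqrt (show 0 ≤ x by linarith)
  have hb := sq_sqrt (show 0 ≤ 1 - x by linarith)
  have ha1 : √x ≤ 1 := sqrt_le_one.2 (by linarith)
  have hb1 : √(1 - x) ≤ 1 := sqrt_le_one.2 (by linarith)
  have hab : ε / 2 ≤ √x * √(1 - x) := by
    nlinarith [mul_nonneg (sqrt_nonneg x) (sqrt_nonneg (1 - x)),
      mul_le_one₀ ha1 (sqrt_nonneg _) hb1]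
  nlinarith [sqrt_nonneg x, sqrt_nonneg (1 - x)]

noncomputable def sqrtWeight (d y : ℝ) : ℝ := exp (-(√d * (√y + √(1 - y))))

/-- For `d > 0` this is `μ_d`: the factor `C_Y² e^{-d}` cancels from `f_{Z_d}`. -/
noncomputable def sqrtWeightLaw (d : ℝ) : Measure ℝ :=
  (volume.restrict (Icc 0 1)).withDensity
    fun x => ENNReal.ofReal (sqrtWeight d x / ∫ y in (0 : ℝ)..1, sqrtWeight d y)

theorem sqrtWeight_one_sub (d y : ℝ) : sqrtWeight d (1 - y) = sqrtWeight d y := by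
  rw [sqrtWeight, sqrtWeight, sub_sub_cancel, add_comm]

theorem map_one_sub_sqrtWeightLaw (d : ℝ) :
    (sqrtWeightLaw d).map (fun x => 1 - x) = sqrtWeightLaw d := by
  rw [sqrtWeightLaw]
  exact map_one_sub_withDensity_restrict_Icc fun x => by rw [sqrtWeight_one_sub]

theorem mul_pow_le_integral_sqrtWeight {d δ : ℝ} (hδ : 0 < δ) (hδ1 : δ ≤ 1) :
    δ ^ 2 * exp (-(√d * (1 + δ))) ≤ ∫ y in (0 : ℝ)..1, sqrtWeight d y := by
  have hint : ∀ a b : ℝ, IntervalIntegrable (sqrtWeight d) volume a b := fun a b =>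
    (by unfold sqrtWeight; fun_prop : Continuous (sqrtWeight d)).intervalIntegrable a b
  have hle : ∀ y ∈ Icc 0 (δ ^ 2), exp (-(√d * (1 + δ))) ≤ sqrtWeight d y := fun y hy => by
    have h1 : √y ≤ δ := sqrt_le_iff.2 ⟨hδ.le, hy.2⟩
    have h2 : √(1 - y) ≤ 1 := sqrt_le_one.2 (by linarith [hy.1])
    exact exp_le_exp.2 (by nlinarith [sqrt_nonneg d])
  calc δ ^ 2 * exp (-(√d * (1 + δ))) = ∫ _ in (0 : ℝ)..δ ^ 2, exp (-(√d * (1 + δ))) := by simp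
    _ ≤ ∫ y in (0 : ℝ)..δ ^ 2, sqrtWeight d y :=
      intervalIntegral.integral_mono_on (by positivity) intervalIntegrable_const (hint _ _) hle
    _ ≤ ∫ y in (0 : ℝ)..1, sqrtWeight d y :=
      intervalIntegral.integral_mono_interval le_rfl (by positivity) (by nlinarith)
        (.of_forall fun y => (exp_pos _).le) (hint 0 1)

theorem sqrtWeight_div_integral_le {d ε x : ℝ} (hε : 0 < ε) (hε2 : ε ≤ 1 / 2)
    (hx : x ∈ Icc ε (1 - ε)) :
    sqrtWeight d x / (∫ y in (0 : ℝ)..1, sqrtWeight d y) ≤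
      ((ε / 6) ^ 2)⁻¹ * exp (-(√d * (ε / 6))) := by
  have hδ : 0 < ε / 6 := by positivity
  have hnum : sqrtWeight d x ≤ exp (-(√d * (1 + 2 * (ε / 6)))) :=
    exp_le_exp.2 (neg_le_neg (mul_le_mul_of_nonneg_left (by
      linarith [one_add_div_three_le_sqrt_add_sqrt hε.le hε2 hx]) (sqrt_nonneg d)))
  have hsplit : exp (-(√d * (1 + 2 * (ε / 6)))) =
      exp (-(√d * (ε / 6))) * exp (-(√d * (1 + ε / 6))) := by
    rw [← exp_add]; ring_nf
  calc sqrtWeight d x / (∫ y in (0 : ℝ)..1, sqrtWeight d y)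
      ≤ exp (-(√d * (1 + 2 * (ε / 6)))) / ((ε / 6) ^ 2 * exp (-(√d * (1 + ε / 6)))) :=
        div_le_div₀ (exp_pos _).le hnum (by positivity)
          (mul_pow_le_integral_sqrtWeight hδ (by linarith))
    _ = ((ε / 6) ^ 2)⁻¹ * exp (-(√d * (ε / 6))) := by
      rw [hsplit]; field_simp

theorem tendsto_sqrtWeightLaw_Icc {ε : ℝ} (hε : 0 < ε) (hε2 : ε < 1 / 2) :
    Tendsto (fun d => sqrtWeightLaw d (Icc ε (1 - ε))) atTop (𝓝 0) := by
  have hlim : Tendsto (fun d => ENNReal.ofReal (((ε / 6) ^ 2)⁻¹ * exp (-(√d * (ε / 6)))))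
      atTop (𝓝 0) := by
    simpa using ENNReal.tendsto_ofReal (((tendsto_exp_atBot.comp
      (tendsto_neg_atTop_atBot.comp (tendsto_sqrt_atTop.atTop_mul_const (by positivity)))).const_mul
        ((ε / 6) ^ 2)⁻¹))
  refine tendsto_of_tendsto_of_tendsto_of_le_of_le tendsto_const_nhds hlim (fun _ => zero_le)
    fun d => ?_
  rw [sqrtWeightLaw]
  refine (withDensity_apply_le_mul measurableSet_Icc fun x hx =>
    ENNReal.ofReal_le_ofReal (sqrtWeight_div_integral_le hε hε2.le hx)).trans ?_
  refine mul_le_of_le_one_right zero_le ?_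
  rw [Measure.restrict_apply measurableSet_Icc]
  exact (measure_mono inter_subset_right).trans_eq (by simp)

theorem mul_eq_sqrtWeight {CY : ℝ} {fY : ℝ → ℝ}
    (hfY : ∀ x, 0 < x → fY x = CY * exp (-x - √x)) {d y : ℝ} (hd : 0 < d)
    (hy : y ∈ Ioo (0 : ℝ) 1) :
    fY (d * y) * fY (d * (1 - y)) = CY ^ 2 * exp (-d) * sqrtWeight d y := by
  rw [hfY _ (mul_pos hd hy.1), hfY _ (mul_pos hd (sub_pos.2 hy.2)), sqrt_mul hd.le,
    sqrt_mul hd.le, sqrtWeight, mul_mul_mul_comm, ← exp_add, sq, mul_assoc (CY * CY), ← exp_add]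
  ring_nf

theorem withDensity_eq_sqrtWeightLaw {CY : ℝ} (hCY : CY ≠ 0) {fY : ℝ → ℝ}
    (hfY : ∀ x, 0 < x → fY x = CY * exp (-x - √x)) {d : ℝ} (hd : 0 < d) {fZ : ℝ → ℝ}
    (hfZ : ∀ x ∈ Ioo (0 : ℝ) 1, fZ x =
      fY (d * x) * fY (d * (1 - x)) / ∫ y in (0 : ℝ)..1, fY (d * y) * fY (d * (1 - y))) :
    (volume.restrict (Icc 0 1)).withDensity (fun x => ENNReal.ofReal (fZ x)) =
      sqrtWeightLaw d := by
  have hnorm : (∫ y in (0 : ℝ)..1, fY (d * y) * fY (d * (1 - y))) =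
      CY ^ 2 * exp (-d) * ∫ y in (0 : ℝ)..1, sqrtWeight d y := by
    rw [intervalIntegral.integral_of_le zero_le_one, intervalIntegral.integral_of_le zero_le_one,
      ← integral_const_mul, integral_Ioc_eq_integral_Ioo, integral_Ioc_eq_integral_Ioo]
    exact setIntegral_congr_fun measurableSet_Ioo fun y hy => mul_eq_sqrtWeight hfY hd hy
  rw [sqrtWeightLaw, ← Measure.restrict_congr_set Ioo_ae_eq_Icc]
  refine withDensity_congr_ae ((ae_restrict_mem measurableSet_Ioo).mono fun x hx => ?_)
  dsimp only
  rw [hfZ x hx, mul_eq_sqrtWeight hfY hd hx, hnorm, mul_div_mul_left _ _ (by positivity)]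

/-- For `f_Y(x) = C_Y·exp(−x−√x)`: `(log f_Y)''(x) = (1/4)x^{−3/2} > 0`,
`d·(f_Y'(dx)/f_Y(dx) − f_Y'(d(1−x))/f_Y(d(1−x))) = (1/2)√d·(−x^{−1/2} + (1−x)^{−1/2}) → −∞`
for `x ∈ (0,1/2)`, and `μ_d → (1/2)δ₀ + (1/2)δ₁` in distribution. -/
theorem stmt_17
    (CY : ℝ)
    (hCY : CY = (∫ y in Set.Ioi (0 : ℝ), Real.exp (-y - Real.sqrt y))⁻¹)
    (fY : ℝ → ℝ)
    (hfY : ∀ x, 0 < x → fY x = CY * Real.exp (-x - Real.sqrt x))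
    (fZ : ℝ → ℝ → ℝ)
    (hfZ : ∀ d : ℝ, ∀ x ∈ Set.Ioo (0 : ℝ) 1, fZ d x =
      fY (d * x) * fY (d * (1 - x)) / ∫ y in (0 : ℝ)..1, fY (d * y) * fY (d * (1 - y)))
    (μ : ℝ → Measure ℝ)
    (hμ : ∀ d, μ d = (volume.restrict (Set.Icc (0 : ℝ) 1)).withDensity
      (fun x => ENNReal.ofReal (fZ d x)))
    (hprob : ∀ d > (0 : ℝ), IsProbabilityMeasure (μ d)) :
    (∀ x > (0 : ℝ),
      deriv (deriv (fun t => Real.log (fY t))) x = (1 / 4) * x ^ (-(3 / 2) : ℝ) ∧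
      0 < deriv (deriv (fun t => Real.log (fY t))) x) ∧
    (∀ x ∈ Set.Ioo (0 : ℝ) (1 / 2),
      (∀ d > (0 : ℝ),
        d * (deriv fY (d * x) / fY (d * x) - deriv fY (d * (1 - x)) / fY (d * (1 - x))) =
          (1 / 2) * Real.sqrt d * (-x ^ (-(1 / 2) : ℝ) + (1 - x) ^ (-(1 / 2) : ℝ))) ∧
      Filter.Tendsto
        (fun d => d * (deriv fY (d * x) / fY (d * x) -
          deriv fY (d * (1 - x)) / fY (d * (1 - x))))
        Filter.atTop Filter.atBot) ∧
    (∀ A : Set ℝ, IsOpen A →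
      ((1 / 2 : ℝ≥0∞) • Measure.dirac (0 : ℝ) + (1 / 2 : ℝ≥0∞) • Measure.dirac (1 : ℝ)) A ≤
        Filter.liminf (fun d => μ d A) Filter.atTop) := by
  have hCY0 : CY ≠ 0 := hCY ▸ (inv_pos.2 integral_exp_neg_sub_sqrt_pos).ne'
  have hlaw : ∀ᶠ d in atTop, μ d = sqrtWeightLaw d := by
    filter_upwards [eventually_gt_atTop 0] with d hd
    rw [hμ, withDensity_eq_sqrtWeightLaw hCY0 hfY hd (hfZ d)]
  have hmass : ∀ᶠ d in atTop, μ d (Icc 0 1) = 1 := by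
    filter_upwards [eventually_gt_atTop 0] with d hd
    rw [← (hprob d hd).measure_univ, hμ, ← restrict_withDensity measurableSet_Icc,
      Measure.restrict_apply_self, Measure.restrict_apply_univ]
  refine ⟨fun x hx => ?_, fun x hx => ⟨fun d hd => ?_, ?_⟩, fun A hA => ?_⟩
  · rw [deriv_deriv_log_eq_of_eq_mul_exp hCY0 hfY hx]
    exact ⟨by ring, by positivity⟩
  · exact mul_sub_deriv_div_self_eq hCY0 hfY ⟨hx.1, by linarith [hx.2]⟩ hd
  · exact tendsto_mul_sub_deriv_div_self_atBot hCY0 hfY hx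
  · refine half_dirac_add_half_dirac_le_liminf hmass ?_ (fun ε hε hε2 => ?_) hA
    · filter_upwards [hlaw] with d hd
      rw [hd, map_one_sub_sqrtWeightLaw]
    · exact (tendsto_sqrtWeightLaw_Icc hε hε2).congr' (hlaw.mono fun d hd => by simp only [hd])
end
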